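/- Let X be a finite set, μ, ν probability measures on X, c a nonnegative cost, Φ an N-function, and ε ≥ 0. Let W = inf_{γ ∈ Π(μ,ν)} ∫ c dγ be the optimal transport cost, and assume W > 0. Then for t = W / Φ^{-1}(1 + ε·[H(μ) + H(ν) − 1]), one has A_ε(t) ≥ 1, where A_ε(t) = inf_{γ ∈ Π(μ,ν)} [ ∫ Φ(c(x,y)/t) dγ − ε H(γ) ] and H denotes Shannon entropy H(γ) = −∑ γ(log γ − 1). -/
import Mathlib


/-- γ is a coupling of probability measures μ and ν on the finite set X. -/
def IsCoupling {X : Type*} [Fintype X] (μ ν : X → ℝ) (γ : X × X → ℝ) : Prop :=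
  (∀ p, 0 ≤ γ p) ∧ (∀ x, ∑ y, γ (x, y) = μ x) ∧ (∀ y, ∑ x, γ (x, y) = ν y)

/-- Shannon entropy H(γ) = −∑ γ(z)(log γ(z) − 1). -/
noncomputable def ent {Z : Type*} [Fintype Z] (γ : Z → ℝ) : ℝ :=
  -∑ z, γ z * (Real.log (γ z) - 1)

/-- Optimal transport cost between μ and ν with cost c. -/
noncomputable def otCost {X : Type*} [Fintype X] (c : X × X → ℝ) (μ ν : X → ℝ) : ℝ :=
  sInf {v : ℝ | ∃ γ : X × X → ℝ, IsCoupling μ ν γ ∧ v = ∑ p, c p * γ p}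

/-- Entropy of a probability vector is at least 1. -/
lemma ent_ge_one {Z : Type*} [Fintype Z] (μ : Z → ℝ) (h0 : ∀ z, 0 ≤ μ z)
    (h1 : ∑ z, μ z = 1) : 1 ≤ ent μ := by
  have hle : ∀ z, μ z ≤ 1 := by
    intro z
    calc μ z ≤ ∑ w, μ w := Finset.single_le_sum (fun w _ => h0 w) (Finset.mem_univ z)
    _ = 1 := h1
  have : ∑ z, μ z * (Real.log (μ z) - 1) ≤ ∑ z, μ z * (0 - 1) := by
    apply Finset.sum_le_sum
    intro z _
    rcases (h0 z).lt_or_eq with h | h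
    · have : Real.log (μ z) ≤ 0 := Real.log_nonpos (h0 z) (hle z)
      nlinarith
    · simp [← h]
  have h2 : ∑ z, μ z * (0 - 1) = -1 := by
    simp [← Finset.sum_mul, h1]
  unfold ent
  linarith [this.trans_eq h2]

lemma ent_eq {Z : Type*} [Fintype Z] (μ : Z → ℝ) (h1 : ∑ z, μ z = 1) :
    ent μ = 1 - ∑ z, μ z * Real.log (μ z) := by
  unfold ent
  have : ∑ z, μ z * (Real.log (μ z) - 1) = (∑ z, μ z * Real.log (μ z)) - ∑ z, μ z := by
    rw [← Finset.sum_sub_distrib]; congr 1; ext z; ring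
  rw [this, h1]; ring

/-- Subadditivity of entropy for couplings. -/
lemma ent_coupling_le {X : Type*} [Fintype X] (μ ν : X → ℝ) (γ : X × X → ℝ)
    (hγ : IsCoupling μ ν γ) (hμ1 : ∑ x, μ x = 1) (hν1 : ∑ x, ν x = 1) :
    ent γ ≤ ent μ + ent ν - 1 := by
  obtain ⟨hγ0, hγμ, hγν⟩ := hγ
  have hμ0 : ∀ x, 0 ≤ μ x := fun x => (hγμ x) ▸ Finset.sum_nonneg fun y _ => hγ0 (x, y)
  have hν0 : ∀ y, 0 ≤ ν y := fun y => (hγν y) ▸ Finset.sum_nonneg fun x _ => hγ0 (x, y)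
  have hγ1 : ∑ p, γ p = 1 := by
    rw [Fintype.sum_prod_type]
    simp only [hγμ, hμ1]
  -- key pointwise inequality
  have key : ∀ p : X × X,
      γ p - μ p.1 * ν p.2 ≤ γ p * (Real.log (γ p) - Real.log (μ p.1) - Real.log (ν p.2)) := by
    intro p
    rcases (hγ0 p).lt_or_eq with h | h
    · -- γ p > 0 hence μ p.1 > 0 and ν p.2 > 0
      have hμp : 0 < μ p.1 := by
        have : γ p ≤ μ p.1 := by
          rw [← hγμ p.1]
          exact Finset.single_le_sum (fun y _ => hγ0 (p.1, y)) (Finset.mem_univ p.2)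
        linarith
      have hνp : 0 < ν p.2 := by
        have : γ p ≤ ν p.2 := by
          rw [← hγν p.2]
          exact Finset.single_le_sum (fun x _ => hγ0 (x, p.2)) (Finset.mem_univ p.1)
        linarith
      have hpos : 0 < μ p.1 * ν p.2 / γ p := by positivity
      have hlog := Real.log_le_sub_one_of_pos hpos
      have hlogeq : Real.log (μ p.1 * ν p.2 / γ p)
          = Real.log (μ p.1) + Real.log (ν p.2) - Real.log (γ p) := by
        rw [Real.log_div (by positivity) (ne_of_gt h), Real.log_mul hμp.ne' hνp.ne']
      rw [hlogeq] at hlog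
      have hmul := mul_le_mul_of_nonneg_left hlog (le_of_lt h)
      have hcancel : γ p * (μ p.1 * ν p.2 / γ p) = μ p.1 * ν p.2 := by
        field_simp
      nlinarith [hmul, hcancel]
    · rw [← h]
      have : 0 ≤ μ p.1 * ν p.2 := mul_nonneg (hμ0 _) (hν0 _)
      simp; linarith
  have hsum := Finset.sum_le_sum (fun p (_ : p ∈ Finset.univ) => key p)
  have hL : ∑ p : X × X, (γ p - μ p.1 * ν p.2) = 0 := by
    rw [Finset.sum_sub_distrib, hγ1, Fintype.sum_prod_type]
    simp only [← Finset.sum_mul, ← Finset.mul_sum, hν1, hμ1]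
    norm_num
  have hR : ∑ p : X × X, γ p * (Real.log (γ p) - Real.log (μ p.1) - Real.log (ν p.2))
      = (∑ p : X × X, γ p * Real.log (γ p)) - (∑ x, μ x * Real.log (μ x))
        - (∑ y, ν y * Real.log (ν y)) := by
    have e1 : ∑ p : X × X, γ p * Real.log (μ p.1) = ∑ x, μ x * Real.log (μ x) := by
      rw [Fintype.sum_prod_type]
      refine Finset.sum_congr rfl fun x _ => ?_
      have h := Finset.sum_mul (Finset.univ) (fun y => γ (x, y)) (Real.log (μ x))
      rw [hγμ x] at h
      exact h.symm
    have e2 : ∑ p : X × X, γ p * Real.log (ν p.2) = ∑ y, ν y * Real.log (ν y) := by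
      rw [Fintype.sum_prod_type_right]
      refine Finset.sum_congr rfl fun y _ => ?_
      have h := Finset.sum_mul (Finset.univ) (fun x => γ (x, y)) (Real.log (ν y))
      rw [hγν y] at h
      exact h.symm
    rw [← e1, ← e2, ← Finset.sum_sub_distrib, ← Finset.sum_sub_distrib]
    congr 1; ext p; ring
  rw [hL, hR] at hsum
  rw [ent_eq γ hγ1, ent_eq μ hμ1, ent_eq ν hν1]
  linarith

/-- for t = W / Φ⁻¹(1 + ε[H(μ)+H(ν)−1]), one has A_ε(t) ≥ 1, where
W is the optimal transport cost (assumed positive). -/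
theorem stmt3 {X : Type*} [Fintype X] (Φ Φinv : ℝ → ℝ) (c : X × X → ℝ) (μ ν : X → ℝ)
    (ε : ℝ) (hε : 0 ≤ ε)
    (hΦmono : StrictMonoOn Φ (Set.Ici 0))
    (hΦconv : ConvexOn ℝ (Set.Ici 0) Φ)
    (hΦ0 : Φ 0 = 0)
    (hinv : ∀ s, 0 ≤ s → Φ (Φinv s) = s ∧ 0 ≤ Φinv s)
    (hinv' : ∀ t, 0 ≤ t → Φinv (Φ t) = t)
    (hc : ∀ p, 0 ≤ c p)
    (hμ0 : ∀ x, 0 ≤ μ x) (hν0 : ∀ x, 0 ≤ ν x)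
    (hμ1 : ∑ x, μ x = 1) (hν1 : ∑ x, ν x = 1)
    (hW : 0 < otCost c μ ν) :
    1 ≤ sInf {v : ℝ | ∃ γ : X × X → ℝ, IsCoupling μ ν γ ∧
      v = (∑ p, Φ (c p / (otCost c μ ν / Φinv (1 + ε * (ent μ + ent ν - 1)))) * γ p)
            - ε * ent γ} := by
  set W := otCost c μ ν with hWdef
  set s := 1 + ε * (ent μ + ent ν - 1) with hsdef
  have hentμ := ent_ge_one μ hμ0 hμ1
  have hentν := ent_ge_one ν hν0 hν1
  have hs1 : 1 ≤ s := by nlinarith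
  have hs0 : 0 ≤ s := by linarith
  obtain ⟨hΦinvs, hΦinvnn⟩ := hinv s hs0
  have hΦinvpos : 0 < Φinv s := by
    rcases hΦinvnn.lt_or_eq with h | h
    · exact h
    · exfalso; rw [← h, hΦ0] at hΦinvs; linarith
  set t := W / Φinv s with htdef
  have ht : 0 < t := div_pos hW hΦinvpos
  apply le_csInf
  · -- nonempty: product coupling
    refine ⟨_, fun p => μ p.1 * ν p.2, ⟨fun p => mul_nonneg (hμ0 _) (hν0 _), ?_, ?_⟩, rfl⟩
    · intro x
      show ∑ y, μ x * ν y = μ x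
      rw [← Finset.mul_sum, hν1, mul_one]
    · intro y
      show ∑ x, μ x * ν y = ν y
      rw [← Finset.sum_mul, hμ1, one_mul]
  · rintro v ⟨γ, hγ, rfl⟩
    obtain ⟨hγ0, hγμ, hγν⟩ := hγ
    have hγ1 : ∑ p, γ p = 1 := by
      rw [Fintype.sum_prod_type]; simp only [hγμ, hμ1]
    -- W ≤ ∑ c γ
    have hWle : W ≤ ∑ p, c p * γ p := by
      apply csInf_le
      · refine ⟨0, ?_⟩
        rintro w ⟨γ', ⟨hγ'0, _, _⟩, rfl⟩
        exact Finset.sum_nonneg fun p _ => mul_nonneg (hc p) (hγ'0 p)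
      · exact ⟨γ, ⟨hγ0, hγμ, hγν⟩, rfl⟩
    -- Jensen
    have hjensen : Φ (∑ p, γ p • (c p / t)) ≤ ∑ p, γ p • Φ (c p / t) :=
      hΦconv.map_sum_le (fun p _ => hγ0 p) hγ1
        (fun p _ => div_nonneg (hc p) ht.le)
    have hsum_eq : ∑ p, γ p • (c p / t) = (∑ p, c p * γ p) / t := by
      rw [Finset.sum_div]
      congr 1; ext p
      simp [smul_eq_mul]; ring
    have hdivle : W / t ≤ (∑ p, c p * γ p) / t := by gcongr
    have hmono : Φ (W / t) ≤ Φ ((∑ p, c p * γ p) / t) :=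
      hΦmono.monotoneOn (Set.mem_Ici.2 (div_nonneg hW.le ht.le))
        (Set.mem_Ici.2 (div_nonneg (hW.le.trans hWle) ht.le)) hdivle
    have hWt : W / t = Φinv s := by
      rw [htdef, div_div_eq_mul_div, mul_comm, mul_div_assoc, div_self hW.ne', mul_one]
    have hkey : s ≤ ∑ p, Φ (c p / t) * γ p := by
      have : Φ (W / t) ≤ ∑ p, γ p • Φ (c p / t) := by
        calc Φ (W / t) ≤ Φ ((∑ p, c p * γ p) / t) := hmono
        _ = Φ (∑ p, γ p • (c p / t)) := by rw [hsum_eq]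
        _ ≤ ∑ p, γ p • Φ (c p / t) := hjensen
      rw [hWt, hΦinvs] at this
      calc s ≤ ∑ p, γ p • Φ (c p / t) := this
      _ = ∑ p, Φ (c p / t) * γ p := by
        congr 1; ext p; simp [smul_eq_mul]; ring
    have hentγ : ent γ ≤ ent μ + ent ν - 1 := ent_coupling_le μ ν γ ⟨hγ0, hγμ, hγν⟩ hμ1 hν1
    have : ε * ent γ ≤ ε * (ent μ + ent ν - 1) := mul_le_mul_of_nonneg_left hentγ hε
    linarith
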